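/- Let d ≥ 1, let C = (C_1,…,C_d) be a coisometric row contraction on H_C, A = (A_1,…,A_d) a row contraction on H_A, and let γ : H_A → ⊕^d H_C be a bounded operator whose range is contained in the kernel of the row operator of C and which is isometric on the range of D_{*,A} (i.e. ‖γ(D_{*,A} h)‖ = ‖D_{*,A} h‖ for all h ∈ H_A). Define B_i : H_C → H_A by B_i* = P_i ∘ γ ∘ D_{*,A}, where P_i : ⊕^d H_C → H_C is the i-th coordinate projection. Then E with block operators E_i = [[C_i, 0],[B_i, A_i]] on H_C ⊕ H_A satisfies ∑_{i=1}^d E_i E_i* = 1, i.e. E is a coisometric lifting of C by A. -/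

import Mathlib

set_option synthInstance.maxHeartbeats 1000000
set_option maxHeartbeats 1000000
noncomputable section

open ContinuousLinearMap

variable {d : ℕ}
variable {H : Type*} [NormedAddCommGroup H] [InnerProductSpace ℂ H] [CompleteSpace H]

/-- The map Φ_T(X) = ∑ T_i X T_i^*. -/
def cpMap (T : Fin d → H →L[ℂ] H) (X : H →L[ℂ] H) : H →L[ℂ] H :=
  ∑ i, T i ∘L X ∘L adjoint (T i)

/-- Row contraction: ∑ T_i T_i^* ≤ 1. -/
def IsRowContraction (T : Fin d → H →L[ℂ] H) : Prop :=
  ∑ i, T i ∘L adjoint (T i) ≤ 1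

/-- The defect operator of T^*: D_{*,T} = (1 - ∑ T_i T_i^*)^(1/2). -/
def defectStar (T : Fin d → H →L[ℂ] H) : H →L[ℂ] H :=
  CFC.sqrt (1 - ∑ i, T i ∘L adjoint (T i))

/-- product T_α = T_{α₁} ⋯ T_{αₙ} over a word α. -/
def opWord (T : Fin d → H →L[ℂ] H) (α : List (Fin d)) : H →L[ℂ] H :=
  (α.map T).prod

/-- *-stable row contraction. -/
def IsStarStable (T : Fin d → H →L[ℂ] H) : Prop :=
  ∀ h : H, Filter.Tendsto
    (fun n : ℕ => ∑ α : Fin n → Fin d, ‖adjoint (opWord T (List.ofFn α)) h‖ ^ 2)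
    Filter.atTop (nhds 0)

instance piLpCompleteSpace {ι : Type*} (G : ι → Type*) [∀ i, NormedAddCommGroup (G i)]
    [∀ i, CompleteSpace (G i)] : CompleteSpace (PiLp 2 G) :=
  inferInstance

section Row

variable (d)

/-- The row operator of a tuple. -/
def rowOp (T : Fin d → H →L[ℂ] H) : PiLp 2 (fun _ : Fin d => H) →L[ℂ] H :=
  ∑ i, (T i) ∘L (ContinuousLinearMap.proj i) ∘L
    (PiLp.continuousLinearEquiv 2 ℂ (fun _ : Fin d => H)).toContinuousLinearMap

/-- The column operator with components (B i)^*. -/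
def colAdj {G : Type*} [NormedAddCommGroup G] [InnerProductSpace ℂ G] [CompleteSpace G]
    (B : Fin d → H →L[ℂ] G) : G →L[ℂ] PiLp 2 (fun _ : Fin d => H) :=
  ((PiLp.continuousLinearEquiv 2 ℂ (fun _ : Fin d => H)).symm.toContinuousLinearMap) ∘L
    (ContinuousLinearMap.pi (fun i => adjoint (B i)))

/-- The defect operator D_T = (1 - T^* T)^(1/2) of the row operator. -/
def defectRow (T : Fin d → H →L[ℂ] H) :
    PiLp 2 (fun _ : Fin d => H) →L[ℂ] PiLp 2 (fun _ : Fin d => H) :=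
  CFC.sqrt (1 - adjoint (rowOp d T) ∘L rowOp d T)

end Row

section Block

variable (HC HA : Type*) [NormedAddCommGroup HC] [InnerProductSpace ℂ HC] [CompleteSpace HC]
  [NormedAddCommGroup HA] [InnerProductSpace ℂ HA] [CompleteSpace HA]

/-- The Hilbert space direct sum H_C ⊕ H_A. -/
abbrev HilbSum := WithLp 2 (HC × HA)

variable {HC HA}

/-- The block operator [[X₁₁, X₁₂],[X₂₁, X₂₂]] on H_C ⊕ H_A. -/
def blockOp (X11 : HC →L[ℂ] HC) (X12 : HA →L[ℂ] HC)
    (X21 : HC →L[ℂ] HA) (X22 : HA →L[ℂ] HA) :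
    HilbSum HC HA →L[ℂ] HilbSum HC HA :=
  ((WithLp.prodContinuousLinearEquiv 2 ℂ HC HA).symm.toContinuousLinearMap) ∘L
    ((X11 ∘L fst ℂ HC HA + X12 ∘L snd ℂ HC HA).prod
      (X21 ∘L fst ℂ HC HA + X22 ∘L snd ℂ HC HA)) ∘L
    ((WithLp.prodContinuousLinearEquiv 2 ℂ HC HA).toContinuousLinearMap)

/-- Compression of an operator on H_C ⊕ H_A to H_C. -/
def comprC (X : HilbSum HC HA →L[ℂ] HilbSum HC HA) : HC →L[ℂ] HC :=
  (fst ℂ HC HA) ∘L ((WithLp.prodContinuousLinearEquiv 2 ℂ HC HA).toContinuousLinearMap) ∘L X ∘L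
    ((WithLp.prodContinuousLinearEquiv 2 ℂ HC HA).symm.toContinuousLinearMap) ∘L (inl ℂ HC HA)

end Block


/-- The i-th coordinate projection of the d-fold Hilbert space direct sum. -/
def projPiLp {H : Type*} [NormedAddCommGroup H] [InnerProductSpace ℂ H] [CompleteSpace H]
    {d : ℕ} (i : Fin d) : PiLp 2 (fun _ : Fin d => H) →L[ℂ] H :=
  (ContinuousLinearMap.proj i) ∘L
    (PiLp.continuousLinearEquiv 2 ℂ (fun _ : Fin d => H)).toContinuousLinearMap

variable {HC HA : Type*} [NormedAddCommGroup HC] [InnerProductSpace ℂ HC] [CompleteSpace HC]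
  [NormedAddCommGroup HA] [InnerProductSpace ℂ HA] [CompleteSpace HA]

/-!
Multiplying out the blocks, `∑ E_i E_i*` has corners `∑ C_i C_i* = 1`, `∑ C_i B_i* = row(C) γ D_{*,A} = 0`
(and its adjoint), and `∑ B_i B_i* + ∑ A_i A_i*`. The `B_i*` are the coordinates of `γ D_{*,A}`, so
`∑ B_i B_i* = (γ D_{*,A})* (γ D_{*,A})`, which equals `D_{*,A}² = 1 - ∑ A_i A_i*` because `γ` is isometric
on the range of `D_{*,A}`.
-/

lemma WithLp.fst_sum {p : ENNReal} {α β ι : Type*} [AddCommGroup α] [AddCommGroup β]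
    (s : Finset ι) (f : ι → WithLp p (α × β)) : (∑ i ∈ s, f i).fst = ∑ i ∈ s, (f i).fst :=
  map_sum (WithLp.fstₗ p ℤ α β) f s

lemma WithLp.snd_sum {p : ENNReal} {α β ι : Type*} [AddCommGroup α] [AddCommGroup β]
    (s : Finset ι) (f : ι → WithLp p (α × β)) : (∑ i ∈ s, f i).snd = ∑ i ∈ s, (f i).snd :=
  map_sum (WithLp.sndₗ p ℤ α β) f s

section BlockOp

variable {E F : Type*} [NormedAddCommGroup E] [InnerProductSpace ℂ E]
  [NormedAddCommGroup F] [InnerProductSpace ℂ F]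

@[simp]
lemma blockOp_fst (a : E →L[ℂ] E) (b : F →L[ℂ] E) (c : E →L[ℂ] F) (e : F →L[ℂ] F)
    (x : HilbSum E F) : (blockOp a b c e x).fst = a x.fst + b x.snd := rfl

@[simp]
lemma blockOp_snd (a : E →L[ℂ] E) (b : F →L[ℂ] E) (c : E →L[ℂ] F) (e : F →L[ℂ] F)
    (x : HilbSum E F) : (blockOp a b c e x).snd = c x.fst + e x.snd := rfl

lemma hilbSum_ext {X Y : HilbSum E F →L[ℂ] HilbSum E F}
    (hfst : ∀ x, (X x).fst = (Y x).fst) (hsnd : ∀ x, (X x).snd = (Y x).snd) : X = Y :=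
  ext fun x => WithLp.ofLp_injective 2 <| Prod.ext (hfst x) (hsnd x)

lemma blockOp_one : blockOp (1 : E →L[ℂ] E) 0 0 (1 : F →L[ℂ] F) = 1 :=
  hilbSum_ext (fun _ => by simp) (fun _ => by simp)

lemma blockOp_comp (a a' : E →L[ℂ] E) (b b' : F →L[ℂ] E) (c c' : E →L[ℂ] F)
    (e e' : F →L[ℂ] F) :
    blockOp a b c e ∘L blockOp a' b' c' e' =
      blockOp (a ∘L a' + b ∘L c') (a ∘L b' + b ∘L e') (c ∘L a' + e ∘L c')
        (c ∘L b' + e ∘L e') :=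
  hilbSum_ext (fun _ => by simp only [comp_apply, add_apply, blockOp_fst, blockOp_snd, map_add]; abel)
    (fun _ => by simp only [comp_apply, add_apply, blockOp_fst, blockOp_snd, map_add]; abel)

lemma sum_blockOp {ι : Type*} (s : Finset ι) (a : ι → E →L[ℂ] E) (b : ι → F →L[ℂ] E)
    (c : ι → E →L[ℂ] F) (e : ι → F →L[ℂ] F) :
    ∑ i ∈ s, blockOp (a i) (b i) (c i) (e i) =
      blockOp (∑ i ∈ s, a i) (∑ i ∈ s, b i) (∑ i ∈ s, c i) (∑ i ∈ s, e i) :=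
  hilbSum_ext (fun _ => by simp [sum_apply, WithLp.fst_sum, Finset.sum_add_distrib])
    (fun _ => by simp [sum_apply, WithLp.snd_sum, Finset.sum_add_distrib])

variable [CompleteSpace E] [CompleteSpace F]

lemma adjoint_blockOp (a : E →L[ℂ] E) (b : F →L[ℂ] E) (c : E →L[ℂ] F) (e : F →L[ℂ] F) :
    adjoint (blockOp a b c e) = blockOp (adjoint a) (adjoint c) (adjoint b) (adjoint e) := by
  refine ((eq_adjoint_iff _ _).mpr fun x y => ?_).symm
  simp only [WithLp.prod_inner_apply, WithLp.ofLp_fst, WithLp.ofLp_snd, blockOp_fst, blockOp_snd,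
    inner_add_left, inner_add_right, adjoint_inner_left]
  ring

lemma blockOp_comp_adjoint_of_upper_eq_zero (c : E →L[ℂ] E) (b : E →L[ℂ] F) (a : F →L[ℂ] F) :
    blockOp c 0 b a ∘L adjoint (blockOp c 0 b a) =
      blockOp (c ∘L adjoint c) (c ∘L adjoint b) (b ∘L adjoint c)
        (b ∘L adjoint b + a ∘L adjoint a) := by
  rw [adjoint_blockOp, blockOp_comp]
  simp

end BlockOp

lemma ContinuousLinearMap.adjoint_comp_self_eq_of_forall_norm_eq {E F G : Type*}
    [NormedAddCommGroup E] [InnerProductSpace ℂ E] [CompleteSpace E]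
    [NormedAddCommGroup F] [InnerProductSpace ℂ F] [CompleteSpace F]
    [NormedAddCommGroup G] [InnerProductSpace ℂ G] [CompleteSpace G]
    {S : E →L[ℂ] F} {R : E →L[ℂ] G} (h : ∀ x, ‖S x‖ = ‖R x‖) :
    adjoint S ∘L S = adjoint R ∘L R := by
  refine coe_injective <| (ext_inner_map _ _).mp fun x => ?_
  simp only [coe_coe, comp_apply, adjoint_inner_left, inner_self_eq_norm_sq_to_K, h x]

lemma adjoint_defectStar_comp_defectStar {T : Fin d → H →L[ℂ] H} (hT : IsRowContraction T) :
    adjoint (defectStar T) ∘L defectStar T = 1 - ∑ i, T i ∘L adjoint (T i) := by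
  have hpos : 0 ≤ 1 - ∑ i, T i ∘L adjoint (T i) := sub_nonneg.mpr hT
  rw [(IsSelfAdjoint.of_nonneg (CFC.sqrt_nonneg _)).adjoint_eq, ← mul_def]
  exact CFC.sqrt_mul_sqrt_self _ hpos

lemma rowOp_eq_sum (T : Fin d → H →L[ℂ] H) : rowOp d T = ∑ i, T i ∘L projPiLp i := rfl

lemma sum_adjoint_projPiLp_comp_projPiLp :
    ∑ i : Fin d, adjoint (projPiLp (H := H) i) ∘L projPiLp i = 1 := by
  refine ext fun x => ext_inner_right ℂ fun y => ?_
  simp [sum_apply, sum_inner, adjoint_inner_left, projPiLp, PiLp.inner_apply]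

section Column

variable {G : Type*} [NormedAddCommGroup G] [InnerProductSpace ℂ G] [CompleteSpace G]
  {B : Fin d → H →L[ℂ] G} {V : G →L[ℂ] PiLp 2 (fun _ : Fin d => H)}

lemma sum_comp_adjoint_eq_rowOp_comp (hB : ∀ i, adjoint (B i) = projPiLp i ∘L V)
    (T : Fin d → H →L[ℂ] H) : ∑ i, T i ∘L adjoint (B i) = rowOp d T ∘L V := by
  simp only [hB, rowOp_eq_sum, finsetSum_comp, comp_assoc]

lemma sum_comp_adjoint_eq_adjoint_comp_self (hB : ∀ i, adjoint (B i) = projPiLp i ∘L V) :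
    ∑ i, B i ∘L adjoint (B i) = adjoint V ∘L V := by
  have hB' : ∀ i, B i = adjoint V ∘L adjoint (projPiLp i) := fun i => by
    rw [← adjoint_comp, ← hB, adjoint_adjoint]
  calc ∑ i, B i ∘L adjoint (B i)
      = ∑ i, (adjoint V ∘L adjoint (projPiLp i)) ∘L (projPiLp i ∘L V) :=
        Finset.sum_congr rfl fun i _ => by rw [hB, hB' i]
    _ = adjoint V ∘L (∑ i, adjoint (projPiLp i) ∘L projPiLp i) ∘L V := by
        simp only [comp_finsetSum, finsetSum_comp, comp_assoc]
    _ = adjoint V ∘L V := by rw [sum_adjoint_projPiLp_comp_projPiLp, one_def, id_comp]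

end Column

theorem stmt3_general {d : ℕ}
    (C : Fin d → HC →L[ℂ] HC) (A : Fin d → HA →L[ℂ] HA) (B : Fin d → HC →L[ℂ] HA)
    (hC : ∑ i, C i ∘L adjoint (C i) = 1) (hA : IsRowContraction A)
    (γ : HA →L[ℂ] PiLp 2 (fun _ : Fin d => HC))
    (hker : ∀ x : HA, γ x ∈ LinearMap.ker (rowOp d C).toLinearMap)
    (hiso : ∀ h : HA, ‖γ (defectStar A h)‖ = ‖defectStar A h‖)
    (hB : ∀ i, adjoint (B i) = projPiLp i ∘L γ ∘L defectStar A) :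
    ∑ i, blockOp (C i) 0 (B i) (A i) ∘L adjoint (blockOp (C i) 0 (B i) (A i)) = 1 := by
  have hCB : ∑ i, C i ∘L adjoint (B i) = 0 := by
    rw [sum_comp_adjoint_eq_rowOp_comp hB]
    exact ext fun x => hker (defectStar A x)
  have hBC : ∑ i, B i ∘L adjoint (C i) = 0 := by
    simpa only [map_sum, adjoint_comp, adjoint_adjoint, map_zero] using congrArg adjoint hCB
  have hBB : ∑ i, B i ∘L adjoint (B i) = 1 - ∑ i, A i ∘L adjoint (A i) := by
    rw [sum_comp_adjoint_eq_adjoint_comp_self hB,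
      adjoint_comp_self_eq_of_forall_norm_eq (R := defectStar A) hiso,
      adjoint_defectStar_comp_defectStar hA]
  simp only [blockOp_comp_adjoint_of_upper_eq_zero]
  rw [sum_blockOp, hC, hCB, hBC, Finset.sum_add_distrib, hBB, sub_add_cancel, blockOp_one]

/-- from a partial isometry `γ` into `ker(row C)` one obtains a coisometric
lifting via `B_i* = P_i ∘ γ ∘ D_{*,A}`. -/
theorem stmt3 {d : ℕ} (hd : 1 ≤ d)
    (C : Fin d → HC →L[ℂ] HC) (A : Fin d → HA →L[ℂ] HA) (B : Fin d → HC →L[ℂ] HA)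
    (hC : ∑ i, C i ∘L adjoint (C i) = 1) (hA : IsRowContraction A)
    (γ : HA →L[ℂ] PiLp 2 (fun _ : Fin d => HC))
    (hker : ∀ x : HA, γ x ∈ LinearMap.ker (rowOp d C).toLinearMap)
    (hiso : ∀ h : HA, ‖γ (defectStar A h)‖ = ‖defectStar A h‖)
    (hB : ∀ i, adjoint (B i) = projPiLp i ∘L γ ∘L defectStar A) :
    ∑ i, blockOp (C i) 0 (B i) (A i) ∘L adjoint (blockOp (C i) 0 (B i) (A i)) = 1 :=
  stmt3_general C A B hC hA γ hker hiso hB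
end
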